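/- arXiv:1701.02502 — 3 statements merged into one kernel-verified Lean document; each statement's English description precedes it below -/
import Mathlib

section
/- If a word w has periods p and q and |w| ≥ p + q - gcd(p,q), then w has period gcd(p,q). -/
/-!
Subtractive Euclid on the pair of periods. If `0 < p < q`, then on the prefix of length `n - p`
the periods `p` and `q` combine into the period `q - p`; since `gcd p (q - p) = gcd p q` and the
length bound is inherited, induction makes that prefix `gcd p q`-periodic. The prefix is at least
`p` long and `gcd p q ∣ p`, so the period `p` carries this back to the whole word.
-/

/-- `w` has period `p`: letters at distance `p` coincide. -/
def HasPeriod {α : Type*} (w : List α) (p : ℕ) : Prop :=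
  ∀ i, i + p < w.length → w[i]? = w[i + p]?

def PeriodicBelow {β : Type*} (f : ℕ → β) (n p : ℕ) : Prop :=
  ∀ i, i + p < n → f i = f (i + p)

theorem hasPeriod_iff_periodicBelow {α : Type*} (w : List α) (p : ℕ) :
    HasPeriod w p ↔ PeriodicBelow (w[·]?) w.length p :=
  Iff.rfl

namespace PeriodicBelow

variable {β : Type*} {f : ℕ → β} {m n p q g : ℕ}

theorem mono (hf : PeriodicBelow f n p) (hmn : m ≤ n) : PeriodicBelow f m p :=
  fun i hi => hf i (by omega)

theorem sub (hp : PeriodicBelow f n p) (hq : PeriodicBelow f n q) (hpq : p ≤ q) :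
    PeriodicBelow f (n - p) (q - p) := by
  intro i hi
  calc f i = f (i + q) := hq i (by omega)
    _ = f (i + (q - p) + p) := by congr 1; omega
    _ = f (i + (q - p)) := (hp _ (by omega)).symm

theorem of_apply_mod_eq (hf : ∀ i < n, f (i % g) = f i) : PeriodicBelow f n g := by
  intro i hi
  rw [← hf i (by omega), ← hf (i + g) hi, Nat.add_mod_right]

/-- Stepping back by `p` preserves residues modulo `g`, so the prefix covers every position. -/
theorem apply_mod_eq_of_prefix (hp : PeriodicBelow f n p) (hp0 : 0 < p) (hpm : p ≤ m)
    (hgp : g ∣ p) (hpre : ∀ i < m, f (i % g) = f i) : ∀ i < n, f (i % g) = f i := by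
  intro i
  induction i using Nat.strong_induction_on with
  | _ i ih =>
    intro hi
    by_cases him : i < m
    · exact hpre i him
    have hpi : p ≤ i := by omega
    have hmod : (i - p) % g = i % g := by
      obtain ⟨c, rfl⟩ := hgp
      conv_rhs => rw [← Nat.sub_add_cancel hpi, Nat.add_mul_mod_self_left]
    calc f (i % g) = f (i - p) := by rw [← hmod, ih (i - p) (by omega) (by omega)]
      _ = f (i - p + p) := hp _ (by omega)
      _ = f i := by rw [Nat.sub_add_cancel hpi]

theorem apply_mod_eq (hp : PeriodicBelow f n p) : ∀ i < n, f (i % p) = f i := by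
  rcases Nat.eq_zero_or_pos p with rfl | hp0
  · simp
  exact hp.apply_mod_eq_of_prefix hp0 le_rfl dvd_rfl fun i hi => by rw [Nat.mod_eq_of_lt hi]

theorem of_prefix (hp : PeriodicBelow f n p) (hg : PeriodicBelow f m g) (hp0 : 0 < p)
    (hpm : p ≤ m) (hgp : g ∣ p) : PeriodicBelow f n g :=
  of_apply_mod_eq (hp.apply_mod_eq_of_prefix hp0 hpm hgp hg.apply_mod_eq)

theorem gcd (hp : PeriodicBelow f n p) (hq : PeriodicBelow f n q)
    (hn : p + q - Nat.gcd p q ≤ n) : PeriodicBelow f n (Nat.gcd p q) := by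
  induction hs : p + q using Nat.strong_induction_on generalizing p q n with
  | _ s ih =>
    wlog hpq : p ≤ q generalizing p q
    · rw [Nat.gcd_comm]
      exact this hq hp (by rw [Nat.gcd_comm]; omega) (by omega) (by omega)
    rcases Nat.eq_zero_or_pos p with rfl | hp0
    · simpa using hq
    rcases hpq.eq_or_lt with rfl | hpq
    · simpa using hp
    have hgcd : Nat.gcd p (q - p) = Nat.gcd p q := Nat.gcd_sub_self_right hpq.le
    have hg : Nat.gcd p q ≤ q - p := by
      rw [← hgcd]; exact Nat.le_of_dvd (by omega) (Nat.gcd_dvd_right _ _)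
    have hprefix : PeriodicBelow f (n - p) (Nat.gcd p q) := by
      rw [← hgcd]
      exact ih (p + (q - p)) (by omega) (hp.mono (Nat.sub_le n p)) (hp.sub hq hpq.le)
        (by omega) rfl
    exact hp.of_prefix hprefix hp0 (by omega) (Nat.gcd_dvd_left p q)

end PeriodicBelow

theorem fine_wilf {α : Type*} (w : List α) (p q : ℕ)
    (hp : HasPeriod w p) (hq : HasPeriod w q)
    (hlen : w.length ≥ p + q - Nat.gcd p q) :
    HasPeriod w (Nat.gcd p q) := by
  rw [hasPeriod_iff_periodicBelow] at *
  exact hp.gcd hq hlen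
end

section
/- Suppose the word equation v0 · v1^{m1} · v2 · v3^{m2} · v4 = w0 · w1^{m2} · w2 · w3^{m1} · w4 holds for all natural numbers m1, m2, where v1 and v3 are nonempty and v0, v2, v4 may not depend on m1, m2. Then the word v1 · v2 · v3 has period gcd(|v1|,|v3|). -/
lemma length_join_replicate {α : Type*} (m : ℕ) (v : List α) :
    (List.replicate m v).flatten.length = m * v.length := by
  induction m with
  | zero => simp
  | succ n ih => simp [List.replicate_succ, ih, Nat.succ_mul]; ring

lemma get?_join_replicate {α : Type*} (v : List α) :
    ∀ (m i : ℕ), i < m * v.length →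
      (List.replicate m v).flatten[i]? = v[i % v.length]? := by
  intro m
  induction m with
  | zero => intro i h; simp at h
  | succ n ih =>
    intro i h
    rw [List.replicate_succ, show ((v :: List.replicate n v).flatten = v ++ (List.replicate n v).flatten) from rfl]
    by_cases hi : i < v.length
    · rw [List.getElem?_append_left hi, Nat.mod_eq_of_lt hi]
    · push_neg at hi
      have hs : (n+1) * v.length = n * v.length + v.length := by ring
      rw [List.getElem?_append_right hi, ih _ (by omega), Nat.mod_eq_sub_mod hi]

theorem fw {β : Type*} (p q n : ℕ) (f : ℕ → β) (hp : 0 < p) (hq : 0 < q) (hn : p + q ≤ n)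
    (h1 : ∀ i, i + p < n → f i = f (i + p))
    (h2 : ∀ i, i + q < n → f i = f (i + q)) :
    ∀ i, i + Nat.gcd p q < n → f i = f (i + Nat.gcd p q) := by
  rcases lt_trichotomy p q with h | h | h
  · intro i hi
    have := fw q p n f hq hp (by omega) h2 h1 i
      (by rw [Nat.gcd_comm q p]; exact hi)
    rwa [Nat.gcd_comm q p] at this
  · subst h
    intro i hi
    rw [Nat.gcd_self] at hi ⊢
    exact h1 i hi
  · have hgpq : Nat.gcd (p - q) q = Nat.gcd p q := Nat.gcd_sub_self_left (le_of_lt h)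
    have h1' : ∀ i, i + (p - q) < n - q → f i = f (i + (p - q)) := by
      intro i hi
      have e1 : f i = f (i + p) := h1 i (by omega)
      have e2 : f (i + (p - q)) = f (i + (p - q) + q) := h2 _ (by omega)
      rw [show i + (p - q) + q = i + p by omega] at e2
      rw [e1, e2]
    have key := fw (p - q) q (n - q) f (by omega) hq (by omega) h1'
      (fun i hi => h2 i (by omega))
    rw [hgpq] at key
    have hd : Nat.gcd p q ∣ p - q := Nat.dvd_sub (Nat.gcd_dvd_left p q) (Nat.gcd_dvd_right p q)
    have hgle : Nat.gcd p q ≤ p - q := Nat.le_of_dvd (by omega) hd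
    intro i hi
    by_cases hc : i + Nat.gcd p q < n - q
    · exact key i hc
    · have hiq : q ≤ i := by omega
      have e1 : f (i - q) = f i := by
        have := h2 (i - q) (by omega)
        rwa [show i - q + q = i by omega] at this
      have e2 : f (i + Nat.gcd p q - q) = f (i + Nat.gcd p q) := by
        have := h2 (i + Nat.gcd p q - q) (by omega)
        rwa [show i + Nat.gcd p q - q + q = i + Nat.gcd p q by omega] at this
      have e3 := key (i - q) (by omega)
      rw [show i - q + Nat.gcd p q = i + Nat.gcd p q - q by omega] at e3
      calc f i = f (i - q) := e1.symm
        _ = f (i + Nat.gcd p q - q) := e3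
        _ = f (i + Nat.gcd p q) := e2
termination_by 2 * (p + q) + (if p < q then 1 else 0)
decreasing_by all_goals (split_ifs <;> omega)

theorem extper {β : Type*} (f : ℕ → β) (b g L n : ℕ) (hb : 0 < b)
    (hL : b + g ≤ L) (hLn : L ≤ n)
    (hper : ∀ i, i + b < n → f i = f (i + b))
    (hpre : ∀ i, i + g < L → f i = f (i + g)) :
    ∀ i, i + g < n → f i = f (i + g) := by
  intro i
  induction i using Nat.strong_induction_on with
  | _ i ih =>
    intro hi
    by_cases hc : i + g < L
    · exact hpre i hc
    · have hbi : b ≤ i := by omega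
      have e1 : f (i - b) = f i := by
        have := hper (i - b) (by omega)
        rwa [show i - b + b = i by omega] at this
      have e2 : f (i + g - b) = f (i + g) := by
        have := hper (i + g - b) (by omega)
        rwa [show i + g - b + b = i + g by omega] at this
      have e3 := ih (i - b) (by omega) (by omega)
      rw [show i - b + g = i + g - b by omega] at e3
      calc f i = f (i - b) := e1.symm
        _ = f (i + g - b) := e3
        _ = f (i + g) := e2


theorem one_way_vs_two_way {α : Type*} (v0 v1 v2 v3 v4 w0 w1 w2 w3 w4 : List α)
    (hv1 : v1 ≠ []) (hv3 : v3 ≠ [])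
    (heq : ∀ m1 m2 : ℕ,
      v0 ++ List.flatten (List.replicate m1 v1) ++ v2 ++
        List.flatten (List.replicate m2 v3) ++ v4 =
      w0 ++ List.flatten (List.replicate m2 w1) ++ w2 ++
        List.flatten (List.replicate m1 w3) ++ w4) :
    HasPeriod (v1 ++ v2 ++ v3) (Nat.gcd v1.length v3.length) := by
  have ha0 : 0 < v1.length := List.length_pos_iff.2 hv1
  have hb0 : 0 < v3.length := List.length_pos_iff.2 hv3
  have hg0 : 0 < Nat.gcd v1.length v3.length := Nat.gcd_pos_of_pos_left _ ha0
  set g := Nat.gcd v1.length v3.length with hgdef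
  have hgb : g ≤ v3.length := Nat.le_of_dvd hb0 (Nat.gcd_dvd_right _ _)
  -- length of w1
  have hw1 : w1.length = v3.length := by
    have h00 := congrArg List.length (heq 0 0)
    have h01 := congrArg List.length (heq 0 1)
    simp [length_join_replicate] at h00 h01
    omega
  -- parameters
  set k' := v3.length + g - 1 with hk'def
  set m1 := k' + w0.length + 2 with hm1def
  set m2 := v0.length + m1 * v1.length + v2.length + v3.length with hm2def
  set s := v0.length + (w0.length + 1) * v1.length with hsdef
  set n1 := (k' + 1) * v1.length with hn1def
  set n2 := n1 + v2.length + v3.length with hn2def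
  -- arithmetic facts
  have e1 : (w0.length + 1) * v1.length + (k' + 1) * v1.length = m1 * v1.length := by
    rw [hm1def]; ring
  have e2 : (w0.length + 1) * v1.length + k' * v1.length = (w0.length + 1 + k') * v1.length := by
    ring
  have e3 : (w0.length + 1 + k') * v1.length + v1.length = m1 * v1.length := by
    rw [hm1def]; ring
  have e4 : w0.length + 1 ≤ (w0.length + 1) * v1.length := Nat.le_mul_of_pos_right _ ha0
  have e5 : v3.length + g ≤ n1 := by
    have h1 : k' + 1 ≤ (k' + 1) * v1.length := Nat.le_mul_of_pos_right _ ha0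
    omega
  have e6 : v1.length + v3.length ≤ n1 := by
    have h1 : (k' + 1) * v1.length = k' * v1.length + v1.length := by ring
    have h2 : v3.length ≤ k' * v1.length := by
      calc v3.length ≤ k' * 1 := by omega
        _ ≤ k' * v1.length := Nat.mul_le_mul_left _ ha0
    omega
  have e7 : m2 ≤ m2 * v3.length := Nat.le_mul_of_pos_right _ hb0
  have e8 : s + n2 = m2 := by omega
  have e9 : (k' + 1) * v1.length = k' * v1.length + v1.length := by ring
  have eb : v3.length ≤ m2 * v3.length := by
    calc v3.length ≤ m2 * 1 := by omega
      _ ≤ m2 * v3.length := Nat.mul_le_mul_left _ hb0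
  -- the big word
  set J1 := (List.replicate m1 v1).flatten with hJ1
  set J2 := (List.replicate m2 v3).flatten with hJ2
  set T := v0 ++ J1 ++ v2 ++ J2 ++ v4 with hT
  set f := fun (i : ℕ) => T[i]? with hf
  have lj1 : J1.length = m1 * v1.length := length_join_replicate _ _
  have lj2 : J2.length = m2 * v3.length := length_join_replicate _ _
  -- getters
  have gA : ∀ i, v0.length ≤ i → i < v0.length + m1 * v1.length →
      f i = v1[(i - v0.length) % v1.length]? := by
    intro i h1 h2
    show (v0 ++ J1 ++ v2 ++ J2 ++ v4)[i]? = _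
    rw [List.getElem?_append_left (by simp [lj1, lj2]; omega),
        List.getElem?_append_left (by simp [lj1]; omega),
        List.getElem?_append_left (by simp [lj1]; omega),
        List.getElem?_append_right (by omega),
        get?_join_replicate v1 m1 _ (by omega)]
  have gV2 : ∀ i, v0.length + m1 * v1.length ≤ i → i < v0.length + m1 * v1.length + v2.length →
      f i = v2[i - (v0.length + m1 * v1.length)]? := by
    intro i h1 h2
    show (v0 ++ J1 ++ v2 ++ J2 ++ v4)[i]? = _
    rw [List.getElem?_append_left (by simp [lj1, lj2]; omega),
        List.getElem?_append_left (by simp [lj1]; omega),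
        List.getElem?_append_right (by simp [lj1]; omega)]
    have harg : i - (v0 ++ J1).length = i - (v0.length + m1 * v1.length) := by
      simp [lj1]
    rw [harg]
  have gJ2 : ∀ i, v0.length + m1 * v1.length + v2.length ≤ i →
      i < v0.length + m1 * v1.length + v2.length + m2 * v3.length →
      f i = v3[(i - (v0.length + m1 * v1.length + v2.length)) % v3.length]? := by
    intro i h1 h2
    show (v0 ++ J1 ++ v2 ++ J2 ++ v4)[i]? = _
    rw [List.getElem?_append_left (by simp [lj1, lj2]; omega),
        List.getElem?_append_right (by simp [lj1]; omega)]
    have harg : i - (v0 ++ J1 ++ v2).length = i - (v0.length + m1 * v1.length + v2.length) := by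
      simp [lj1]; omega
    rw [harg, get?_join_replicate v3 m2 _ (by omega)]
  have gB : ∀ i, w0.length ≤ i → i < w0.length + m2 * v3.length →
      f i = w1[(i - w0.length) % w1.length]? := by
    intro i h1 h2
    show (v0 ++ J1 ++ v2 ++ J2 ++ v4)[i]? = _
    rw [heq m1 m2]
    rw [List.getElem?_append_left (by simp [length_join_replicate, hw1]; omega),
        List.getElem?_append_left (by simp [length_join_replicate, hw1]; omega),
        List.getElem?_append_left (by simp [length_join_replicate, hw1]; omega),
        List.getElem?_append_right (by omega),
        get?_join_replicate w1 m2 _ (by rw [hw1]; omega)]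
  -- periods
  have periodA : ∀ i, v0.length ≤ i → i + v1.length < v0.length + m1 * v1.length →
      f i = f (i + v1.length) := by
    intro i h1 h2
    rw [gA i h1 (by omega), gA (i + v1.length) (by omega) h2]
    congr 1
    rw [show i + v1.length - v0.length = (i - v0.length) + v1.length by omega,
      Nat.add_mod_right]
  have periodB : ∀ i, w0.length ≤ i → i + v3.length < w0.length + m2 * v3.length →
      f i = f (i + v3.length) := by
    intro i h1 h2
    rw [gB i h1 (by omega), gB (i + v3.length) (by omega) h2]
    congr 1
    rw [show i + v3.length - w0.length = (i - w0.length) + v3.length by omega, hw1,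
      Nat.add_mod_right]
  -- fact C : the window of T starting at v0.length + (w0.length+1+k') * v1.length
  -- spells out v1 ++ v2 ++ v3
  have gC : ∀ j, j < v1.length + v2.length + v3.length →
      f (v0.length + (w0.length + 1 + k') * v1.length + j) = (v1 ++ v2 ++ v3)[j]? := by
    intro j hj
    rcases lt_or_ge j v1.length with hja | hja
    · rw [List.getElem?_append_left (by simp; omega), List.getElem?_append_left (by omega)]
      rw [gA (v0.length + (w0.length + 1 + k') * v1.length + j) (by omega) (by omega)]
      congr 1
      rw [show v0.length + (w0.length + 1 + k') * v1.length + j - v0.length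
            = j + (w0.length + 1 + k') * v1.length by omega,
        Nat.add_mul_mod_self_right, Nat.mod_eq_of_lt hja]
    · rcases lt_or_ge j (v1.length + v2.length) with hjc | hjc
      · rw [List.getElem?_append_left (by simp; omega), List.getElem?_append_right (by omega)]
        rw [show v0.length + (w0.length + 1 + k') * v1.length + j
              = v0.length + m1 * v1.length + (j - v1.length) by omega]
        rw [gV2 (v0.length + m1 * v1.length + (j - v1.length)) (by omega) (by omega)]
        congr 1
        omega
      · rw [List.getElem?_append_right (by simp; omega)]
        rw [show v0.length + (w0.length + 1 + k') * v1.length + j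
              = v0.length + m1 * v1.length + v2.length + (j - v1.length - v2.length) by omega]
        rw [gJ2 (v0.length + m1 * v1.length + v2.length + (j - v1.length - v2.length))
          (by omega) (by omega)]
        rw [show v0.length + m1 * v1.length + v2.length + (j - v1.length - v2.length)
              - (v0.length + m1 * v1.length + v2.length) = j - v1.length - v2.length by omega,
          Nat.mod_eq_of_lt (by omega)]
        congr 1
        simp only [List.length_append]
        omega
  -- step 1 : period g on [s, s + n1)
  have step1 := fw v1.length v3.length n1 (fun j => f (s + j)) ha0 hb0 e6
    (fun j hj => by
      have := periodA (s + j) (by omega) (by omega)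
      simpa [Nat.add_assoc] using this)
    (fun j hj => by
      have := periodB (s + j) (by omega) (by omega)
      simpa [Nat.add_assoc] using this)
  rw [← hgdef] at step1
  -- step 2 : period g on [s, s + n2)
  have step2 := extper (fun j => f (s + j)) v3.length g n1 n2 hb0 e5 (by omega)
    (fun j hj => by
      have := periodB (s + j) (by omega) (by omega)
      simpa [Nat.add_assoc] using this)
    step1
  -- conclude
  intro i hi
  simp only [List.length_append] at hi
  have h2 := step2 (k' * v1.length + i) (by omega)
  have h2' : f (s + (k' * v1.length + i)) = f (s + (k' * v1.length + i + g)) := h2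
  rw [show s + (k' * v1.length + i) = v0.length + (w0.length + 1 + k') * v1.length + i by omega,
      show s + (k' * v1.length + i + g)
        = v0.length + (w0.length + 1 + k') * v1.length + (i + g) by omega] at h2'
  rw [← gC i (by omega), ← gC (i + g) (by omega)]
  exact h2'
end

section
/- Suppose the equation v0 · v1^m · v2 = w0 · w1^m · w2 holds for two distinct values m = m' and m = m'' with m' < m'', where all words are over a common alphabet and |v1| = |w1| > 0. Then the equation holds for all natural numbers m. -/
/-!
If `|v0| ≤ |w0|`, write `w0 = v0 s`; the equation at `m` becomes `v1^m v2 = s w1^m w2`.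
Comparing the two solutions gives `v1^d s = s w1^d` for `d = m'' - m' > 0`, and since
`|v1| = |w1|` this forces `v1 s = s w1`: by induction on `|s|`, either `s` is a prefix of `v1 = s p`
and then `(p s)^d = w1^d` gives `w1 = p s`, or `v1` is a prefix of `s` and cancels. Hence
`v1^m s = s w1^m` for all `m`, the solution at `m'` gives `v2 = s w2`, and every `m` is a solution.
-/

section CancelMonoid

variable {M : Type*} [Monoid M] {x y s u w : M}

theorem pow_sub_mul_eq_mul_pow_sub [IsRightCancelMul M] {m' m'' : ℕ} (hle : m' ≤ m'')
    (h' : x ^ m' * u = s * (y ^ m' * w)) (h'' : x ^ m'' * u = s * (y ^ m'' * w)) :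
    x ^ (m'' - m') * s = s * y ^ (m'' - m') := by
  obtain ⟨d, rfl⟩ := Nat.exists_eq_add_of_le' hle
  rw [Nat.add_sub_cancel]
  apply mul_right_cancel (b := y ^ m' * w)
  calc x ^ d * s * (y ^ m' * w) = x ^ (d + m') * u := by
        rw [mul_assoc, ← h', ← mul_assoc, ← pow_add]
    _ = s * y ^ d * (y ^ m' * w) := by rw [h'', pow_add]; simp only [mul_assoc]

theorem pow_mul_eq_mul_pow_mul_of_mul_eq_mul [IsLeftCancelMul M] (hs : x * s = s * y) {m' : ℕ}
    (h : x ^ m' * u = s * (y ^ m' * w)) (m : ℕ) : x ^ m * u = s * (y ^ m * w) := by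
  have hpow (n : ℕ) : x ^ n * s = s * y ^ n := ((SemiconjBy.pow_right hs.symm n).eq).symm
  have hu : u = s * w :=
    mul_left_cancel (a := x ^ m') (by rw [h, ← mul_assoc, ← hpow, mul_assoc])
  rw [hu, ← mul_assoc, hpow, mul_assoc]

end CancelMonoid

namespace FreeMonoid

variable {α : Type*}

theorem ofList_flatten_replicate (v : List α) (m : ℕ) :
    ofList (List.replicate m v).flatten = ofList v ^ m := by
  rw [ofList_flatten, List.map_replicate, List.prod_replicate]

theorem exists_eq_mul_of_mul_eq_mul {a b c e : FreeMonoid α} (h : a * b = c * e)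
    (hl : a.length ≤ c.length) : ∃ s, c = a * s := by
  have hc : c.toList <+: (a * b).toList := by rw [h]; exact List.prefix_append _ _
  obtain ⟨s, hs⟩ := List.prefix_of_prefix_length_le (List.prefix_append _ _) hc hl
  exact ⟨ofList s, hs.symm⟩

theorem eq_of_pow_eq_pow {x y : FreeMonoid α} {d : ℕ} (hd : d ≠ 0) (hl : x.length = y.length)
    (h : x ^ d = y ^ d) : x = y := by
  obtain ⟨e, rfl⟩ := Nat.exists_eq_add_one_of_ne_zero hd
  rw [pow_succ', pow_succ'] at h
  exact List.append_inj_left h hl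

theorem mul_eq_mul_of_pow_mul_eq_mul_pow {x y s : FreeMonoid α} {d : ℕ} (hd : d ≠ 0)
    (hl : x.length = y.length) (h : x ^ d * s = s * y ^ d) : x * s = s * y := by
  obtain rfl | hx1 := eq_or_ne x 1
  · obtain rfl : y = 1 := length_eq_zero.mp (hl ▸ length_one)
    rw [one_mul, mul_one]
  have hx : 0 < x.length := Nat.pos_of_ne_zero (mt length_eq_zero.mp hx1)
  obtain ⟨e, rfl⟩ := Nat.exists_eq_add_one_of_ne_zero hd
  rcases lt_or_ge s.length x.length with hs | hs
  · obtain ⟨p, rfl⟩ :=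
      exists_eq_mul_of_mul_eq_mul (h.symm.trans (by rw [pow_succ', mul_assoc])) hs.le
    have hconj : (s * p) ^ (e + 1) * s = s * (p * s) ^ (e + 1) :=
      ((SemiconjBy.pow_right (mul_assoc s p s).symm _).eq).symm
    have hps : p * s = y :=
      eq_of_pow_eq_pow hd (by rw [← hl, length_mul, length_mul, Nat.add_comm])
        (mul_left_cancel (hconj.symm.trans h))
    rw [← hps, mul_assoc]
  · obtain ⟨s', rfl⟩ := exists_eq_mul_of_mul_eq_mul
      (show x * (x ^ e * s) = s * y ^ (e + 1) by rw [← mul_assoc, ← pow_succ']; exact h) hs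
    have h' : x ^ (e + 1) * s' = s' * y ^ (e + 1) :=
      mul_left_cancel (a := x) <| by
        rw [← mul_assoc, ← pow_succ', pow_succ, mul_assoc, h, mul_assoc]
    rw [mul_assoc, mul_eq_mul_of_pow_mul_eq_mul_pow hd hl h']
termination_by s.length
decreasing_by subst_vars; rw [length_mul]; omega

theorem mul_pow_mul_eq_mul_pow_mul_of_two {a b x y u w : FreeMonoid α} {m' m'' : ℕ}
    (hlt : m' < m'') (hl : x.length = y.length) (h' : a * x ^ m' * u = b * y ^ m' * w)
    (h'' : a * x ^ m'' * u = b * y ^ m'' * w) (m : ℕ) : a * x ^ m * u = b * y ^ m * w := by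
  wlog hab : a.length ≤ b.length generalizing a b x y u w
  · exact (this hl.symm h'.symm h''.symm (le_of_not_ge hab)).symm
  obtain ⟨s, rfl⟩ := exists_eq_mul_of_mul_eq_mul
    (show a * (x ^ m' * u) = b * (y ^ m' * w) by simpa only [mul_assoc] using h') hab
  simp only [mul_assoc, mul_right_inj] at h' h'' ⊢
  have hroot : x * s = s * y :=
    mul_eq_mul_of_pow_mul_eq_mul_pow (Nat.sub_ne_zero_of_lt hlt) hl
      (pow_sub_mul_eq_mul_pow_sub hlt.le h' h'')
  exact pow_mul_eq_mul_pow_mul_of_mul_eq_mul hroot h' m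

end FreeMonoid

theorem word_equation_two_solutions_all_general {α : Type*}
    (v0 v1 v2 w0 w1 w2 : List α) (m' m'' : ℕ)
    (hlt : m' < m'') (hlen : v1.length = w1.length)
    (h1 : v0 ++ List.flatten (List.replicate m' v1) ++ v2 =
          w0 ++ List.flatten (List.replicate m' w1) ++ w2)
    (h2 : v0 ++ List.flatten (List.replicate m'' v1) ++ v2 =
          w0 ++ List.flatten (List.replicate m'' w1) ++ w2) :
    ∀ m : ℕ, v0 ++ List.flatten (List.replicate m v1) ++ v2 =
             w0 ++ List.flatten (List.replicate m w1) ++ w2 := by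
  intro m
  apply FreeMonoid.ofList.injective
  replace h1 := congrArg FreeMonoid.ofList h1
  replace h2 := congrArg FreeMonoid.ofList h2
  simp only [FreeMonoid.ofList_append, FreeMonoid.ofList_flatten_replicate] at h1 h2 ⊢
  exact FreeMonoid.mul_pow_mul_eq_mul_pow_mul_of_two hlt hlen h1 h2 m

theorem word_equation_two_solutions_all {α : Type*}
    (v0 v1 v2 w0 w1 w2 : List α) (m' m'' : ℕ)
    (hlt : m' < m'') (hlen : v1.length = w1.length) (hpos : 0 < v1.length)
    (h1 : v0 ++ List.flatten (List.replicate m' v1) ++ v2 =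
          w0 ++ List.flatten (List.replicate m' w1) ++ w2)
    (h2 : v0 ++ List.flatten (List.replicate m'' v1) ++ v2 =
          w0 ++ List.flatten (List.replicate m'' w1) ++ w2) :
    ∀ m : ℕ, v0 ++ List.flatten (List.replicate m v1) ++ v2 =
             w0 ++ List.flatten (List.replicate m w1) ++ w2 :=
  word_equation_two_solutions_all_general v0 v1 v2 w0 w1 w2 m' m'' hlt hlen h1 h2
end
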